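/- arXiv:1906.00406 — 2 statements merged into one kernel-verified Lean document; each statement's English description precedes it below -/
import Mathlib

section
/- Let $F$ be a $J$-good filtration and $F'$ a $J'$-good filtration of ideals in a commutative ring $A$. Then there exists a positive integer $c$ such that for all $m,n \ge 0$, $(F)_{m+c}(F')_{n+c} = J^m (J')^n (F)_c (F')_c$. -/
lemma good_stable_aux {A : Type*} [CommRing A] (F : ℕ → Ideal A) (J : Ideal A)
    (N : ℕ) (h : ∀ n ≥ N, F (n + 1) = J * F n) (c : ℕ) (hc : N ≤ c) :
    ∀ m : ℕ, F (m + c) = J ^ m * F c := by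
  intro m
  induction m with
  | zero => simp
  | succ m ih =>
    have : m + 1 + c = (m + c) + 1 := by ring
    rw [this, h (m + c) (le_trans hc (Nat.le_add_left c m)), ih, pow_succ]
    ring

/-- For a `J`-good filtration `F` and a `J'`-good filtration `F'`, there is a positive
integer `c` with `(F)_{m+c}(F')_{n+c} = J^m J'^n (F)_c (F')_c` for all `m, n ≥ 0`. -/
theorem two_good_filtrations_stable {A : Type*} [CommRing A]
    (F F' : ℕ → Ideal A) (J J' : Ideal A)
    (hF0 : F 0 = ⊤) (hanti : Antitone F) (hmul : ∀ m n : ℕ, F m * F n ≤ F (m + n))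
    (hgood1 : ∀ n : ℕ, J * F n ≤ F (n + 1))
    (hgood2 : ∃ N : ℕ, ∀ n ≥ N, F (n + 1) = J * F n)
    (hF0' : F' 0 = ⊤) (hanti' : Antitone F') (hmul' : ∀ m n : ℕ, F' m * F' n ≤ F' (m + n))
    (hgood1' : ∀ n : ℕ, J' * F' n ≤ F' (n + 1))
    (hgood2' : ∃ N : ℕ, ∀ n ≥ N, F' (n + 1) = J' * F' n) :
    ∃ c : ℕ, 0 < c ∧ ∀ m n : ℕ,
      F (m + c) * F' (n + c) = J ^ m * J' ^ n * (F c * F' c) := by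
  obtain ⟨N, hN⟩ := hgood2
  obtain ⟨N', hN'⟩ := hgood2'
  refine ⟨max N N' + 1, Nat.succ_pos _, fun m n => ?_⟩
  rw [good_stable_aux F J N hN _ (le_trans (le_max_left N N') (Nat.le_succ _)),
      good_stable_aux F' J' N' hN' _ (le_trans (le_max_right N N') (Nat.le_succ _))]
  ring
end

section
/- Let $A$ be a commutative Noetherian ring and $F$ a $J$-good filtration of ideals in $A$. Then the Rees algebra $\mathfrak R(F; A) = \bigoplus_{n\ge 0} (F)_n t^n \subseteq A[t]$ is a finitely generated module over the Rees algebra $\mathfrak R(J; A) = A[Jt]$; in particular $\mathfrak R(F;A)$ is a Noetherian ring. -/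
/-!
Viewed as an `Ideal.Filtration`, `F` is `J`-stable; as every `(F)ₙ` is finitely generated, the
Artin–Rees criterion (stable ⟺ finitely generated Rees module) makes `⊕ₙ (F)ₙ tⁿ` a finitely
generated module over `A[Jt]`.
Since `Jⁿ ⊆ (F)ₙ`, the Rees algebra of `F` contains `A[Jt]`, which is of finite type over `A`;
adjoining the finitely many module generators shows that `𝔯(F; A)` is of finite type over the
Noetherian ring `A`, hence Noetherian by the Hilbert basis theorem.
-/

open Polynomial

/-- The Rees algebra `⊕ₙ (F)ₙ tⁿ` of a filtration of ideals `F`, as the subalgebra of `A[X]`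
of polynomials whose `n`-th coefficient lies in `(F)ₙ`. -/
def filtrationRees {A : Type*} [CommRing A] (F : ℕ → Ideal A) (hF0 : F 0 = ⊤)
    (hmul : ∀ m n : ℕ, F m * F n ≤ F (m + n)) : Subalgebra A A[X] where
  carrier := {p : A[X] | ∀ n : ℕ, p.coeff n ∈ F n}
  add_mem' := by
    intro p q hp hq n
    rw [coeff_add]
    exact (F n).add_mem (hp n) (hq n)
  mul_mem' := by
    intro p q hp hq n
    rw [coeff_mul]
    refine Ideal.sum_mem _ ?_
    rintro ⟨i, j⟩ hc
    have hij : i + j = n := Finset.HasAntidiagonal.mem_antidiagonal.mp hc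
    exact hij ▸ hmul i j (Ideal.mul_mem_mul (hp i) (hq j))
  algebraMap_mem' := by
    intro a n
    rw [Polynomial.algebraMap_eq, coeff_C]
    split_ifs with h
    · rw [h, hF0]; trivial
    · exact (F n).zero_mem

namespace Subalgebra

variable {A B : Type*} [CommRing A] [CommRing B] [Algebra A B]

theorem fg_of_le_of_le_span {R S : Subalgebra A B} (hR : R.FG) (hRS : R ≤ S) {s : Finset B}
    (hsS : (s : Set B) ⊆ S) (hSs : ∀ x ∈ S, x ∈ Submodule.span R (s : Set B)) : S.FG := by
  classical
  obtain ⟨s₀, rfl⟩ := hR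
  refine ⟨s₀ ∪ s, le_antisymm (Algebra.adjoin_le ?_) fun x hx => ?_⟩
  · rw [Finset.coe_union]
    exact Set.union_subset (Algebra.adjoin_le_iff.mp hRS) hsS
  · rw [Finset.coe_union, Algebra.adjoin_union_eq_adjoin_adjoin]
    exact Algebra.span_le_adjoin _ _ (hSs x hx)

end Subalgebra

namespace Ideal.Filtration

variable {A : Type*} [CommRing A] {J : Ideal A}

theorem Stable.exists_finset_span_eq [IsNoetherianRing A] {Fil : J.Filtration A}
    (h : Fil.Stable) :
    ∃ s : Finset A[X], ∀ p : A[X],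
      p ∈ Submodule.span (reesAlgebra J) (s : Set A[X]) ↔ ∀ n, p.coeff n ∈ Fil.N n := by
  classical
  let e : PolynomialModule A A ≃ₗ[reesAlgebra J] A[X] :=
    PolynomialModule.equivPolynomialSelf.restrictScalars (reesAlgebra J)
  obtain ⟨t, ht⟩ := (Fil.submodule_fg_iff_stable fun _ => IsNoetherian.noetherian _).mpr h
  refine ⟨t.image e, fun p => ?_⟩
  rw [Finset.coe_image, ← LinearEquiv.coe_toLinearMap, Submodule.span_image, ht,
    Submodule.mem_map_equiv]
  rfl

theorem pow_le_N_of_N_zero_eq_top {Fil : J.Filtration A} (h0 : Fil.N 0 = ⊤) (n : ℕ) :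
    J ^ n ≤ Fil.N n := by
  simpa [h0] using Fil.pow_smul_le n 0

end Ideal.Filtration

/-- If `F` is a `J`-good filtration of ideals in a Noetherian ring `A`, then the Rees
algebra `𝔯(F; A)` is a finitely generated module over the Rees algebra `𝔯(J; A) = A[Jt]`;
in particular `𝔯(F; A)` is a Noetherian ring. -/
theorem filtrationRees_finite_over_reesAlgebra {A : Type*} [CommRing A] [IsNoetherianRing A]
    (F : ℕ → Ideal A) (J : Ideal A)
    (hF0 : F 0 = ⊤) (hanti : Antitone F) (hmul : ∀ m n : ℕ, F m * F n ≤ F (m + n))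
    (hgood1 : ∀ n : ℕ, J * F n ≤ F (n + 1))
    (hgood2 : ∃ N : ℕ, ∀ n ≥ N, F (n + 1) = J * F n) :
    (∃ s : Finset A[X], (↑s : Set A[X]) ⊆ (filtrationRees F hF0 hmul : Set A[X]) ∧
        ∀ p ∈ filtrationRees F hF0 hmul,
          p ∈ Submodule.span (reesAlgebra J) (s : Set A[X])) ∧
      IsNoetherianRing (filtrationRees F hF0 hmul) := by
  let Fil : J.Filtration A := ⟨F, fun n => hanti n.le_succ, hgood1⟩
  have hstable : Fil.Stable := by
    obtain ⟨N, hN⟩ := hgood2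
    exact ⟨N, fun n hn => (hN n hn).symm⟩
  obtain ⟨s, hs⟩ := hstable.exists_finset_span_eq
  have hsub : (s : Set A[X]) ⊆ filtrationRees F hF0 hmul := fun p hp =>
    (hs p).mp (Submodule.subset_span hp)
  have hspan : ∀ p ∈ filtrationRees F hF0 hmul,
      p ∈ Submodule.span (reesAlgebra J) (s : Set A[X]) := fun p hp => (hs p).mpr hp
  have hle : reesAlgebra J ≤ filtrationRees F hF0 hmul := fun p hp n =>
    Fil.pow_le_N_of_N_zero_eq_top hF0 n ((mem_reesAlgebra_iff J p).mp hp n)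
  have hfg : (filtrationRees F hF0 hmul).FG :=
    Subalgebra.fg_of_le_of_le_span (reesAlgebra.fg (IsNoetherian.noetherian J)) hle hsub hspan
  have : Algebra.FiniteType A (filtrationRees F hF0 hmul) :=
    ⟨(filtrationRees F hF0 hmul).fg_top.mpr hfg⟩
  exact ⟨⟨s, hsub, hspan⟩, Algebra.FiniteType.isNoetherianRing A _⟩
end
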